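/- With the notation above, if the unweighted subcritical Yamabe constant satisfies ∫_M vLv dvol ≥ 0 for all v ∈ C_c^∞(M), then lim_{α→0+} Q_p^α = Q_p, i.e. the weighted subcritical Yamabe constants converge to the unweighted one as the weight exponent tends to zero. -/

import Mathlib

open MeasureTheory Filter

/-- The `L^p` norm `(∫ |f|^p)^{1/p}` as a real number. -/
noncomputable def LpNormR {M : Type*} [MeasurableSpace M] (μ : Measure M) (p : ℝ)
    (f : M → ℝ) : ℝ :=
  (∫ x, |f x| ^ p ∂μ) ^ (1 / p)

/-- The weighted (subcritical) Yamabe constant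
`Q_p^α = inf { ∫ v L v | v ∈ C_c^∞(M), ‖ρ^α v‖_p = 1 }`. -/
noncomputable def weightedYamabe {M : Type*} [MeasurableSpace M] (μ : Measure M)
    (T : Set (M → ℝ)) (E : (M → ℝ) → ℝ) (ρ : M → ℝ) (p α : ℝ) : ℝ :=
  sInf {q : ℝ | ∃ v ∈ T, LpNormR μ p (fun x => ρ x ^ α * v x) = 1 ∧ q = E v}

/-!
By homogeneity of `E`, `Q_p^α` is the infimum of the Rayleigh quotient `E v / ‖ρ^α v‖_p²` over
the `v ∈ T` with `‖v‖_p > 0`, and this index set does not depend on `α ≥ 0`. Since `ρ ≤ 1` and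
`E ≥ 0`, each quotient dominates its value at `α = 0`, to which it converges as `α → 0⁺` by
dominated convergence. An infimum of functions dominating their pointwise limits converges to the
infimum of the limits; this is the interchange `inf_α inf_v = inf_v inf_α`.
-/

open Topology

theorem tendsto_iInf_of_le_of_tendsto {ι α : Type*} {l : Filter α} {f : α → ι → ℝ} {g : ι → ℝ}
    (hg : BddBelow (Set.range g)) (hle : ∀ᶠ a in l, ∀ i, g i ≤ f a i)
    (hf : ∀ i, Tendsto (f · i) l (𝓝 (g i))) :
    Tendsto (fun a => ⨅ i, f a i) l (𝓝 (⨅ i, g i)) := by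
  cases isEmpty_or_nonempty ι with
  | inl _ => simp only [Real.iInf_of_isEmpty, tendsto_const_nhds]
  | inr _ =>
    refine tendsto_order.2 ⟨fun b hb => ?_, fun b hb => ?_⟩
    · filter_upwards [hle] with a ha
      exact hb.trans_le (le_ciInf fun i => (ciInf_le hg i).trans (ha i))
    · obtain ⟨i, hi⟩ := exists_lt_of_ciInf_lt hb
      filter_upwards [hle, (hf i).eventually_lt_const hi] with a ha hai
      have hbdd : BddBelow (Set.range (f a)) :=
        ⟨⨅ i, g i, Set.forall_mem_range.2 fun j => (ciInf_le hg j).trans (ha j)⟩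
      exact (ciInf_le hbdd i).trans_lt hai

theorem abs_rpow_mul_rpow {r : ℝ} (hr : 0 < r) (α y p : ℝ) :
    |r ^ α * y| ^ p = r ^ (α * p) * |y| ^ p := by
  rw [abs_mul, abs_of_pos (Real.rpow_pos_of_pos hr α),
    Real.mul_rpow (Real.rpow_pos_of_pos hr α).le (abs_nonneg _), ← Real.rpow_mul hr.le]

section WeightedNorm

variable {M : Type*} [MeasurableSpace M] {μ : Measure M} {ρ : M → ℝ} {p : ℝ}

theorem LpNormR_nonneg (f : M → ℝ) : 0 ≤ LpNormR μ p f :=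
  Real.rpow_nonneg (integral_nonneg fun _ => Real.rpow_nonneg (abs_nonneg _) _) _

theorem LpNormR_pos_iff (hp : 0 < p) (f : M → ℝ) :
    0 < LpNormR μ p f ↔ 0 < ∫ x, |f x| ^ p ∂μ := by
  refine ⟨fun h => (integral_nonneg fun _ => Real.rpow_nonneg (abs_nonneg _) _).lt_of_ne ?_,
    fun h => Real.rpow_pos_of_pos h _⟩
  intro h0
  simp [LpNormR, ← h0, hp.ne'] at h

theorem LpNormR_const_mul (hp : 0 < p) (t : ℝ) (f : M → ℝ) :
    LpNormR μ p (fun x => t * f x) = |t| * LpNormR μ p f := by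
  have hpow : (fun x => |t * f x| ^ p) = fun x => |t| ^ p * |f x| ^ p := by
    funext x; rw [abs_mul, Real.mul_rpow (abs_nonneg _) (abs_nonneg _)]
  rw [LpNormR, hpow, integral_const_mul,
    Real.mul_rpow (Real.rpow_nonneg (abs_nonneg t) p)
      (integral_nonneg fun x => Real.rpow_nonneg (abs_nonneg _) p),
    ← Real.rpow_mul (abs_nonneg t), mul_one_div_cancel hp.ne', Real.rpow_one, LpNormR]

theorem LpNormR_rpow_mul (hρ : ∀ x, 0 < ρ x) (α : ℝ) (v : M → ℝ) :
    LpNormR μ p (fun x => ρ x ^ α * v x) = (∫ x, ρ x ^ (α * p) * |v x| ^ p ∂μ) ^ (1 / p) := by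
  simp_rw [LpNormR, abs_rpow_mul_rpow (hρ _)]

end WeightedNorm

section WeightedIntegral

variable {M : Type*} [MeasurableSpace M] {μ : Measure M} {ρ : M → ℝ} {c : ℝ} {f : M → ℝ}

theorem integrable_rpow_mul (hρm : Measurable ρ) (hρ : ∀ x, 0 < ρ x ∧ ρ x ≤ 1)
    (hc : 0 ≤ c) (hf : Integrable f μ) : Integrable (fun x => ρ x ^ c * f x) μ := by
  refine hf.bdd_mul (c := 1) (hρm.pow_const c).aestronglyMeasurable (ae_of_all _ fun x => ?_)
  rw [Real.norm_of_nonneg (Real.rpow_nonneg (hρ x).1.le c)]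
  exact Real.rpow_le_one (hρ x).1.le (hρ x).2 hc

theorem integral_rpow_mul_le (hρm : Measurable ρ) (hρ : ∀ x, 0 < ρ x ∧ ρ x ≤ 1)
    (hc : 0 ≤ c) (hf0 : 0 ≤ f) (hf : Integrable f μ) :
    ∫ x, ρ x ^ c * f x ∂μ ≤ ∫ x, f x ∂μ :=
  integral_mono (integrable_rpow_mul hρm hρ hc hf) hf fun x =>
    mul_le_of_le_one_left (hf0 x) (Real.rpow_le_one (hρ x).1.le (hρ x).2 hc)

theorem integral_rpow_mul_pos_iff (hρm : Measurable ρ) (hρ : ∀ x, 0 < ρ x ∧ ρ x ≤ 1)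
    (hc : 0 ≤ c) (hf0 : 0 ≤ f) (hf : Integrable f μ) :
    0 < ∫ x, ρ x ^ c * f x ∂μ ↔ 0 < ∫ x, f x ∂μ := by
  have hsupp : Function.support (fun x => ρ x ^ c * f x) = Function.support f := by
    rw [Function.support_mul, Function.support_eq_univ fun x =>
      (Real.rpow_pos_of_pos (hρ x).1 c).ne', Set.univ_inter]
  rw [integral_pos_iff_support_of_nonneg (fun x => mul_nonneg
      (Real.rpow_nonneg (hρ x).1.le c) (hf0 x)) (integrable_rpow_mul hρm hρ hc hf),
    integral_pos_iff_support_of_nonneg hf0 hf, hsupp]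

theorem tendsto_integral_rpow_mul {ι : Type*} {l : Filter ι} [l.IsCountablyGenerated] {e : ι → ℝ} (hρm : Measurable ρ)
    (hρ : ∀ x, 0 < ρ x ∧ ρ x ≤ 1) (he : Tendsto e l (𝓝 0)) (he0 : ∀ᶠ i in l, 0 ≤ e i)
    (hf : Integrable f μ) :
    Tendsto (fun i => ∫ x, ρ x ^ e i * f x ∂μ) l (𝓝 (∫ x, f x ∂μ)) := by
  refine tendsto_integral_filter_of_dominated_convergence (fun x => ‖f x‖) ?_ ?_ hf.norm ?_
  · exact Eventually.of_forall fun i =>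
      ((hρm.pow_const _).aestronglyMeasurable).mul hf.aestronglyMeasurable
  · filter_upwards [he0] with i hi
    refine ae_of_all _ fun x => ?_
    rw [norm_mul, Real.norm_of_nonneg (Real.rpow_nonneg (hρ x).1.le _)]
    exact mul_le_of_le_one_left (norm_nonneg _) (Real.rpow_le_one (hρ x).1.le (hρ x).2 hi)
  · refine ae_of_all _ fun x => ?_
    have hpow := ((Real.continuousAt_const_rpow (hρ x).1.ne').tendsto.comp he).mul_const (f x)
    simpa only [Function.comp_def, Real.rpow_zero, one_mul] using hpow

end WeightedIntegral

section WeightedNormAsymptotics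

variable {M : Type*} [MeasurableSpace M] {μ : Measure M} {ρ : M → ℝ} {p α : ℝ} {v : M → ℝ}

theorem LpNormR_rpow_mul_pos_iff (hp : 0 < p) (hρm : Measurable ρ)
    (hρ : ∀ x, 0 < ρ x ∧ ρ x ≤ 1) (hα : 0 ≤ α) (hv : Integrable (fun x => |v x| ^ p) μ) :
    0 < LpNormR μ p (fun x => ρ x ^ α * v x) ↔ 0 < LpNormR μ p v := by
  simp_rw [LpNormR_pos_iff hp, abs_rpow_mul_rpow (hρ _).1]
  exact integral_rpow_mul_pos_iff hρm hρ (mul_nonneg hα hp.le)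
    (fun _ => Real.rpow_nonneg (abs_nonneg _) _) hv

theorem LpNormR_rpow_mul_le (hp : 0 < p) (hρm : Measurable ρ)
    (hρ : ∀ x, 0 < ρ x ∧ ρ x ≤ 1) (hα : 0 ≤ α) (hv : Integrable (fun x => |v x| ^ p) μ) :
    LpNormR μ p (fun x => ρ x ^ α * v x) ≤ LpNormR μ p v := by
  rw [LpNormR_rpow_mul (fun x => (hρ x).1), LpNormR]
  refine Real.rpow_le_rpow
    (integral_nonneg fun x => mul_nonneg (Real.rpow_nonneg (hρ x).1.le _)
      (Real.rpow_nonneg (abs_nonneg _) _))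
    (integral_rpow_mul_le hρm hρ (mul_nonneg hα hp.le)
      (fun _ => Real.rpow_nonneg (abs_nonneg _) _) hv) (by positivity)

theorem tendsto_LpNormR_rpow_mul (hp : 0 < p) (hρm : Measurable ρ)
    (hρ : ∀ x, 0 < ρ x ∧ ρ x ≤ 1) (hv : Integrable (fun x => |v x| ^ p) μ) :
    Tendsto (fun α : ℝ => LpNormR μ p (fun x => ρ x ^ α * v x)) (𝓝[>] 0) (𝓝 (LpNormR μ p v)) := by
  have he : Tendsto (fun α : ℝ => α * p) (𝓝[>] 0) (𝓝 0) :=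
    ((continuous_id.mul continuous_const).tendsto' 0 0 (zero_mul p)).mono_left
      nhdsWithin_le_nhds
  have he0 : ∀ᶠ α : ℝ in 𝓝[>] 0, 0 ≤ α * p := by
    filter_upwards [self_mem_nhdsWithin] with α hα using mul_nonneg (le_of_lt hα) hp.le
  simp_rw [LpNormR_rpow_mul (fun x => (hρ x).1)]
  exact (Real.continuousAt_rpow_const _ _ (Or.inr (by positivity))).tendsto.comp
    (tendsto_integral_rpow_mul hρm hρ he he0 hv)

end WeightedNormAsymptotics

section Yamabe

variable {M : Type*} [MeasurableSpace M] {μ : Measure M} {T : Set (M → ℝ)}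
  {E : (M → ℝ) → ℝ} {ρ : M → ℝ} {p α : ℝ} {v : M → ℝ}

noncomputable def yamabeQuotient (μ : Measure M) (E : (M → ℝ) → ℝ) (ρ : M → ℝ) (p α : ℝ)
    (v : M → ℝ) : ℝ :=
  E v / LpNormR μ p (fun x => ρ x ^ α * v x) ^ 2

theorem yamabeQuotient_zero : yamabeQuotient μ E ρ p 0 v = E v / LpNormR μ p v ^ 2 := by
  simp only [yamabeQuotient, Real.rpow_zero, one_mul]

theorem yamabeQuotient_zero_le (hp : 0 < p) (hρm : Measurable ρ)
    (hρ : ∀ x, 0 < ρ x ∧ ρ x ≤ 1) (hα : 0 ≤ α) (hv : Integrable (fun x => |v x| ^ p) μ)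
    (hE : 0 ≤ E v) (hpos : 0 < LpNormR μ p v) :
    yamabeQuotient μ E ρ p 0 v ≤ yamabeQuotient μ E ρ p α v := by
  rw [yamabeQuotient_zero, yamabeQuotient]
  refine div_le_div_of_nonneg_left hE
    (pow_pos ((LpNormR_rpow_mul_pos_iff hp hρm hρ hα hv).2 hpos) 2)
    (pow_le_pow_left₀ (LpNormR_nonneg _) (LpNormR_rpow_mul_le hp hρm hρ hα hv) 2)

theorem tendsto_yamabeQuotient (hp : 0 < p) (hρm : Measurable ρ)
    (hρ : ∀ x, 0 < ρ x ∧ ρ x ≤ 1) (hv : Integrable (fun x => |v x| ^ p) μ)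
    (hpos : 0 < LpNormR μ p v) :
    Tendsto (fun α => yamabeQuotient μ E ρ p α v) (𝓝[>] 0)
      (𝓝 (yamabeQuotient μ E ρ p 0 v)) := by
  rw [yamabeQuotient_zero]
  exact tendsto_const_nhds.div ((tendsto_LpNormR_rpow_mul hp hρm hρ hv).pow 2)
    (pow_ne_zero 2 hpos.ne')

theorem weightedYamabe_eq_sInf_image (hp : 0 < p)
    (hscale : ∀ v ∈ T, ∀ t : ℝ, (fun x => t * v x) ∈ T)
    (hEquad : ∀ v ∈ T, ∀ t : ℝ, E (fun x => t * v x) = t ^ 2 * E v) :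
    weightedYamabe μ T E ρ p α = sInf (yamabeQuotient μ E ρ p α ''
      {v ∈ T | 0 < LpNormR μ p (fun x => ρ x ^ α * v x)}) := by
  refine congrArg sInf (Set.ext fun q => ⟨?_, ?_⟩)
  · rintro ⟨v, hv, hnorm, rfl⟩
    exact ⟨v, ⟨hv, hnorm ▸ one_pos⟩, by rw [yamabeQuotient, hnorm, one_pow, div_one]⟩
  · rintro ⟨v, ⟨hv, hpos⟩, rfl⟩
    set N := LpNormR μ p (fun x => ρ x ^ α * v x)
    refine ⟨fun x => N⁻¹ * v x, hscale v hv _, ?_, ?_⟩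
    · have hcomm : (fun x => ρ x ^ α * (N⁻¹ * v x)) = fun x => N⁻¹ * (ρ x ^ α * v x) := by
        funext x; ring
      rw [hcomm, LpNormR_const_mul hp, abs_of_pos (inv_pos.2 hpos), inv_mul_cancel₀ hpos.ne']
    · rw [hEquad v hv, yamabeQuotient, inv_pow, inv_mul_eq_div]

theorem weightedYamabe_eq_iInf (hp : 0 < p) (hρm : Measurable ρ)
    (hρ : ∀ x, 0 < ρ x ∧ ρ x ≤ 1) (hα : 0 ≤ α)
    (hTint : ∀ v ∈ T, Integrable (fun x => |v x| ^ p) μ)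
    (hscale : ∀ v ∈ T, ∀ t : ℝ, (fun x => t * v x) ∈ T)
    (hEquad : ∀ v ∈ T, ∀ t : ℝ, E (fun x => t * v x) = t ^ 2 * E v) :
    weightedYamabe μ T E ρ p α =
      ⨅ v : {v ∈ T | 0 < LpNormR μ p v}, yamabeQuotient μ E ρ p α v := by
  have hadm : {v ∈ T | 0 < LpNormR μ p (fun x => ρ x ^ α * v x)} =
      {v ∈ T | 0 < LpNormR μ p v} :=
    Set.ext fun v => and_congr_right fun hv =>
      LpNormR_rpow_mul_pos_iff hp hρm hρ hα (hTint v hv)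
  rw [weightedYamabe_eq_sInf_image hp hscale hEquad, hadm, sInf_image']

end Yamabe

theorem weightedYamabe_tendsto_unweighted_general {M : Type*} [MeasurableSpace M] (μ : Measure M)
    (T : Set (M → ℝ)) (E : (M → ℝ) → ℝ) (ρ : M → ℝ)
    (hρm : Measurable ρ) (hρ : ∀ x, 0 < ρ x ∧ ρ x ≤ 1)
    (p : ℝ) (hp : 2 ≤ p)
    (hTint : ∀ v ∈ T, Integrable (fun x => |v x| ^ p) μ)
    (hscale : ∀ v ∈ T, ∀ t : ℝ, (fun x => t * v x) ∈ T)
    (hEquad : ∀ v ∈ T, ∀ t : ℝ, E (fun x => t * v x) = t ^ 2 * E v)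
    (hE : ∀ v ∈ T, 0 ≤ E v) :
    Tendsto (fun α => weightedYamabe μ T E ρ p α) (nhdsWithin 0 (Set.Ioi 0))
      (nhds (weightedYamabe μ T E ρ p 0)) := by
  have hp0 : 0 < p := by linarith
  have hQ : ∀ α : ℝ, 0 ≤ α → weightedYamabe μ T E ρ p α =
      ⨅ v : {v ∈ T | 0 < LpNormR μ p v}, yamabeQuotient μ E ρ p α v :=
    fun α hα => weightedYamabe_eq_iInf hp0 hρm hρ hα hTint hscale hEquad
  rw [hQ 0 le_rfl]
  refine (tendsto_iInf_of_le_of_tendsto ?bdd ?le ?lim).congr'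
    (eventually_nhdsWithin_of_forall fun α hα => (hQ α (le_of_lt hα)).symm)
  case bdd =>
    refine ⟨0, Set.forall_mem_range.2 fun v => ?_⟩
    rw [yamabeQuotient_zero]
    exact div_nonneg (hE v v.2.1) (sq_nonneg _)
  case le =>
    filter_upwards [self_mem_nhdsWithin] with α hα v
    exact yamabeQuotient_zero_le hp0 hρm hρ (le_of_lt hα) (hTint v v.2.1) (hE v v.2.1) v.2.2
  case lim =>
    exact fun v => tendsto_yamabeQuotient hp0 hρm hρ (hTint v v.2.1) v.2.2

/-- if `∫ v L v ≥ 0` for all test functions `v`, then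
`lim_{α→0+} Q_p^α = Q_p`, i.e. the weighted subcritical Yamabe constants converge to the
unweighted one `Q_p = Q_p^0` as the weight exponent tends to zero. -/
theorem weightedYamabe_tendsto_unweighted {M : Type*} [MeasurableSpace M] (μ : Measure M)
    (T : Set (M → ℝ)) (E : (M → ℝ) → ℝ) (ρ : M → ℝ)
    (hρm : Measurable ρ) (hρ : ∀ x, 0 < ρ x ∧ ρ x ≤ 1)
    (n : ℕ) (hn : 3 ≤ n) (p : ℝ) (hp : 2 ≤ p) (hp' : p < 2 * n / ((n : ℝ) - 2))
    (hTmeas : ∀ v ∈ T, Measurable v)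
    (hTint : ∀ v ∈ T, Integrable (fun x => |v x| ^ p) μ)
    (hscale : ∀ v ∈ T, ∀ t : ℝ, (fun x => t * v x) ∈ T)
    (hEquad : ∀ v ∈ T, ∀ t : ℝ, E (fun x => t * v x) = t ^ 2 * E v)
    (hE : ∀ v ∈ T, 0 ≤ E v) :
    Tendsto (fun α => weightedYamabe μ T E ρ p α) (nhdsWithin 0 (Set.Ioi 0))
      (nhds (weightedYamabe μ T E ρ p 0)) :=
  weightedYamabe_tendsto_unweighted_general μ T E ρ hρm hρ p hp hTint hscale hEquad hE
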